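/- For a non-negative integer m and a non-negative integer i, the limit as z tends to -m of (z + m)^(i+1) * ψ^(i)(z) equals (-1)^(i+1) * i!, where ψ^(i) is the i-th derivative of the digamma function. -/

import Mathlib

/-!
Near `-m` the functional equation `ψ(s + 1) = ψ(s) + 1/s`, iterated `m + 1` times, writes
`ψ(s) = R(s) - 1/(s + m)` with `R` analytic at `-m`. Differentiating `i` times, the
`i`-th derivative of `-1/(s + m)` is `(-1)^(i+1) i! (s + m)^(-i-1)`, while
`(s + m)^(i+1) R^(i)(s) → 0`.
-/

open Complex Filter Topology Finset Nat

section SimplePole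

variable {𝕜 : Type*} [NontriviallyNormedField 𝕜]

theorem iteratedDeriv_sub_const_inv (n : ℕ) (a z : 𝕜) :
    iteratedDeriv n (fun w => (w - a)⁻¹) z = (-1) ^ n * n ! * (z - a) ^ (-1 - n : ℤ) := by
  simpa [iteratedDeriv_eq_iterate] using congrFun (iter_deriv_inv_linear_sub n 1 a) z

theorem sub_pow_succ_mul_iteratedDeriv_sub_const_inv (n : ℕ) {a z : 𝕜} (hz : z ≠ a) :
    (z - a) ^ (n + 1) * iteratedDeriv n (fun w => (w - a)⁻¹) z = (-1) ^ n * n ! := by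
  have hza : z - a ≠ 0 := sub_ne_zero.mpr hz
  rw [iteratedDeriv_sub_const_inv, mul_left_comm, ← zpow_natCast (z - a), ← zpow_add₀ hza]
  push_cast
  rw [show (n + 1 + (-1 - n) : ℤ) = 0 by ring, zpow_zero, mul_one]

theorem eventually_iteratedDeriv_eq_add_inv [CompleteSpace 𝕜] {f g : 𝕜 → 𝕜} {a c : 𝕜}
    (hg : AnalyticAt 𝕜 g a) (hf : f =ᶠ[𝓝[≠] a] fun z => g z + c * (z - a)⁻¹) (n : ℕ) :
    ∀ᶠ z in 𝓝[≠] a, iteratedDeriv n f z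
      = iteratedDeriv n g z + c * iteratedDeriv n (fun w => (w - a)⁻¹) z := by
  have hf' : ∀ᶠ z in 𝓝[≠] a, f =ᶠ[𝓝 z] fun z => g z + c * (z - a)⁻¹ := by
    filter_upwards [eventually_eventually_nhdsWithin.mpr hf, self_mem_nhdsWithin] with z hz hza
    rwa [isOpen_compl_singleton.nhdsWithin_eq hza] at hz
  filter_upwards [hf', nhdsWithin_le_nhds hg.eventually_analyticAt, self_mem_nhdsWithin]
    with z hfz hgz hza
  have hinv : ContDiffAt 𝕜 n (fun w => c * (w - a)⁻¹) z :=
    contDiffAt_const.mul ((contDiffAt_id.sub contDiffAt_const).inv (sub_ne_zero.mpr hza))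
  rw [(hfz.iteratedDeriv n).eq_of_nhds, iteratedDeriv_fun_add hgz.contDiffAt hinv,
    iteratedDeriv_const_mul_field]

theorem tendsto_sub_pow_mul_iteratedDeriv_of_eventuallyEq_add_inv [CompleteSpace 𝕜]
    {f g : 𝕜 → 𝕜} {a c : 𝕜} (hg : AnalyticAt 𝕜 g a)
    (hf : f =ᶠ[𝓝[≠] a] fun z => g z + c * (z - a)⁻¹) (n : ℕ) :
    Tendsto (fun z => (z - a) ^ (n + 1) * iteratedDeriv n f z) (𝓝[≠] a)
      (𝓝 (c * ((-1) ^ n * n !))) := by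
  have hreg : Tendsto (fun z => (z - a) ^ (n + 1) * iteratedDeriv n g z) (𝓝[≠] a) (𝓝 0) := by
    have hcont : ContinuousAt (fun z => (z - a) ^ (n + 1) * iteratedDeriv n g z) a := by
      rw [iteratedDeriv_eq_iterate]
      exact ((continuousAt_id.sub continuousAt_const).pow _).mul
        (hg.iterated_deriv n).continuousAt
    simpa using hcont.tendsto.mono_left nhdsWithin_le_nhds
  have hpole : ∀ᶠ z in 𝓝[≠] a, (z - a) ^ (n + 1) * iteratedDeriv n f z
      = (z - a) ^ (n + 1) * iteratedDeriv n g z + c * ((-1) ^ n * n !) := by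
    filter_upwards [eventually_iteratedDeriv_eq_add_inv hg hf n, self_mem_nhdsWithin]
      with z hz hza
    rw [hz, mul_add, mul_left_comm, sub_pow_succ_mul_iteratedDeriv_sub_const_inv n hza]
  rw [tendsto_congr' hpole]
  simpa using hreg.add_const (c * ((-1) ^ n * n !))

end SimplePole

namespace Complex

theorem analyticAt_Gamma {s : ℂ} (hs : ∀ m : ℕ, s ≠ -m) : AnalyticAt ℂ Gamma s := by
  have h := (differentiable_one_div_Gamma.analyticAt s).inv (inv_ne_zero (Gamma_ne_zero hs))
  simpa only [Pi.inv_def, inv_inv] using h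

theorem analyticAt_digamma {s : ℂ} (hs : ∀ m : ℕ, s ≠ -m) : AnalyticAt ℂ digamma s :=
  (analyticAt_Gamma hs).deriv.div (analyticAt_Gamma hs) (Gamma_ne_zero hs)

theorem digamma_add_nat {s : ℂ} (hs : ∀ m : ℕ, s ≠ -m) (n : ℕ) :
    digamma (s + n) = digamma s + ∑ k ∈ range n, (s + k)⁻¹ := by
  induction n with
  | zero => simp
  | succ n ih =>
    have hsn : ∀ m : ℕ, s + n ≠ -m := fun m h => hs (m + n) (by push_cast; linear_combination h)
    rw [Nat.cast_succ, ← add_assoc, digamma_apply_add_one _ hsn, ih, sum_range_succ, add_assoc]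

theorem eventually_ne_neg_natCast (m : ℕ) : ∀ᶠ s : ℂ in 𝓝[≠] (-(m : ℂ)), ∀ n : ℕ, s ≠ -n := by
  filter_upwards [nhdsWithin_le_nhds (Metric.ball_mem_nhds _ one_pos), self_mem_nhdsWithin]
    with s hball hs n rfl
  have hnm : n ≠ m := by rintro rfl; exact hs rfl
  have := Nat.pairwise_one_le_dist hnm
  rw [Metric.mem_ball, dist_neg_neg, ← ofReal_natCast, ← ofReal_natCast, isometry_ofReal.dist_eq,
    Nat.dist_cast_real] at hball
  linarith

noncomputable def digammaRegularPart (m : ℕ) (s : ℂ) : ℂ :=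
  digamma (s + (m + 1)) - ∑ k ∈ range m, (s + k)⁻¹

theorem analyticAt_digammaRegularPart (m : ℕ) :
    AnalyticAt ℂ (digammaRegularPart m) (-m) := by
  have hshift : AnalyticAt ℂ (fun s : ℂ => digamma (s + (m + 1))) (-m) := by
    refine AnalyticAt.fun_comp ?_ (analyticAt_id.add analyticAt_const)
    rw [show -(m : ℂ) + (m + 1) = 1 by ring]
    refine analyticAt_digamma fun n h => ?_
    have := congrArg re h
    simp only [one_re, neg_re, natCast_re] at this
    linarith [n.cast_nonneg (α := ℝ)]
  have hsum : AnalyticAt ℂ (fun s : ℂ => ∑ k ∈ range m, (s + k)⁻¹) (-m) := by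
    refine Finset.analyticAt_fun_sum _ fun k hk => (analyticAt_id.add analyticAt_const).inv ?_
    show -(m : ℂ) + k ≠ 0
    rw [ne_eq, neg_add_eq_zero, Nat.cast_inj]
    exact (mem_range.mp hk).ne'
  exact hshift.sub hsum

theorem digamma_eventuallyEq_digammaRegularPart_add_inv (m : ℕ) :
    digamma =ᶠ[𝓝[≠] (-(m : ℂ))] fun s => digammaRegularPart m s + -1 * (s - -m)⁻¹ := by
  filter_upwards [eventually_ne_neg_natCast m] with s hs
  have := digamma_add_nat hs (m + 1)
  rw [sum_range_succ] at this
  push_cast at this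
  rw [digammaRegularPart, this]
  ring

end Complex

theorem polygamma_leading_coeff (m i : ℕ) :
    Filter.Tendsto
      (fun z : ℂ => (z + m) ^ (i + 1) *
        iteratedDeriv i (fun w : ℂ => deriv Complex.Gamma w / Complex.Gamma w) z)
      (nhdsWithin (-(m : ℂ)) {(-(m : ℂ))}ᶜ)
      (nhds ((-1 : ℂ) ^ (i + 1) * (Nat.factorial i : ℂ))) := by
  have h := tendsto_sub_pow_mul_iteratedDeriv_of_eventuallyEq_add_inv
    (analyticAt_digammaRegularPart m) (digamma_eventuallyEq_digammaRegularPart_add_inv m) i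
  rw [show (-1 : ℂ) ^ (i + 1) * i ! = -1 * ((-1) ^ i * i !) by ring]
  simp only [sub_neg_eq_add] at h
  exact h
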